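/- Eigendecomposition of the averaged PSC coset state: the density matrix ρ = |C|^{-1} Σ_{c ∈ C} Z(c) |θ⟩⟨θ|^{⊗n} Z(c) has eigenvectors |ψ(m)⟩ = Σ_{v ∈ m G_{C^⫫} ⊕ C^⊥} √(p_v / λ(m)) |v⟩ with eigenvalues λ(m) = Σ_{v ∈ m G_{C^⫫} ⊕ C^⊥} p^{w_H(v)} (1-p)^{n - w_H(v)} for m ∈ F_2^k, where p = sin²(θ/2) = (1 − cos θ)/2, and these account for all nonzero eigenvalues. In particular the nonzero eigenvalues of ρ are the dual-channel coset probabilities {2^{-k/2} ŝ(m)}. -/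

import Mathlib

open Matrix
open scoped Classical

noncomputable section

/-- Hamming weight of a binary vector. -/
def hammingWt {ι : Type*} [Fintype ι] (v : ι → ZMod 2) : ℕ :=
  (Finset.univ.filter fun i => v i ≠ 0).card

/-- i.i.d. Bernoulli(p) probability of a vector. -/
def bernP (p : ℝ) (n : ℕ) {ι : Type*} [Fintype ι] (v : ι → ZMod 2) : ℝ :=
  p ^ hammingWt v * (1 - p) ^ (n - hammingWt v)

/-- The vector Z(c_g)|θ⟩^{⊗n} (real amplitudes), with c_g = g·G_C and G_C the
top k rows of the invertible matrix A. -/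
def pscVec {k m : ℕ} (θ : ℝ) (A : Matrix (Fin k ⊕ Fin m) (Fin k ⊕ Fin m) (ZMod 2))
    (g : Fin k → ZMod 2) : ((Fin k ⊕ Fin m) → ZMod 2) → ℝ := fun v =>
  (-1 : ℝ) ^ ((dotProduct (Matrix.vecMul g (A.submatrix Sum.inl id)) v).val) *
    ∏ j, (if v j = 0 then Real.cos (θ / 2) else Real.sin (θ / 2))

/-- The averaged PSC coset state ρ = 2^{-k} ∑_{c ∈ C} Z(c)|θ⟩⟨θ|^{⊗n} Z(c). -/
def rhoPSC {k m : ℕ} (θ : ℝ) (A : Matrix (Fin k ⊕ Fin m) (Fin k ⊕ Fin m) (ZMod 2)) :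
    Matrix ((Fin k ⊕ Fin m) → ZMod 2) ((Fin k ⊕ Fin m) → ZMod 2) ℝ :=
  ((2 : ℝ) ^ k)⁻¹ •
    ∑ g : Fin k → ZMod 2, Matrix.vecMulVec (pscVec θ A g) (pscVec θ A g)

/-- λ(m̂) = ∑_{v ∈ m̂ G_{C^⫫} ⊕ C^⊥} p^{w_H(v)}(1-p)^{n-w_H(v)}. -/
def lamPSC {k m : ℕ} (p : ℝ) (A : Matrix (Fin k ⊕ Fin m) (Fin k ⊕ Fin m) (ZMod 2))
    (mh : Fin k → ZMod 2) : ℝ :=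
  ∑ u : Fin m → ZMod 2,
    bernP p (k + m) (Matrix.vecMul mh (((A⁻¹)ᵀ).submatrix Sum.inl id)
      + Matrix.vecMul u (((A⁻¹)ᵀ).submatrix Sum.inr id))

/-- The eigenvector |ψ(m̂)⟩ = ∑_{v ∈ m̂ G_{C^⫫} ⊕ C^⊥} √(p_v/λ(m̂)) |v⟩. -/
def psiPSC {k m : ℕ} (p : ℝ) (A : Matrix (Fin k ⊕ Fin m) (Fin k ⊕ Fin m) (ZMod 2))
    (mh : Fin k → ZMod 2) : ((Fin k ⊕ Fin m) → ZMod 2) → ℝ := fun v =>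
  if ∃ u : Fin m → ZMod 2,
      v = Matrix.vecMul mh (((A⁻¹)ᵀ).submatrix Sum.inl id)
        + Matrix.vecMul u (((A⁻¹)ᵀ).submatrix Sum.inr id)
  then Real.sqrt (bernP p (k + m) v / lamPSC p A mh) else 0

/-!
Write `s v = G_C v` for the syndrome of `v` with respect to the generator rows of `A` and
`a v = √p_v` for the amplitudes of `|θ⟩^{⊗n}` (`p = sin²(θ/2)`). Averaging the signs
`(-1)^{c·(v+w)}` over `c ∈ C` kills every entry with `s v ≠ s w`, so
`ρ v w = [s v = s w] a v a w`. Hence `ρ` is block diagonal along the cosets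
`{v | s v = m̂} = m̂ G_{C^⫫} ⊕ C^⊥`, and the block of `m̂` is the rank-one matrix `b bᵀ`,
where `b` is `a` restricted to the coset: `b bᵀ = λ(m̂) |ψ(m̂)⟩⟨ψ(m̂)|` with `λ(m̂) = ‖b‖²`.
-/

def parityChar : AddChar (ZMod 2) ℝ :=
  AddChar.zmodChar 2 (by norm_num : (-1 : ℝ) ^ 2 = 1)

lemma parityChar_apply (x : ZMod 2) : parityChar x = (-1) ^ x.val := rfl

lemma parityChar_eq_one_iff (x : ZMod 2) : parityChar x = 1 ↔ x = 0 := by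
  obtain rfl | rfl : x = 0 ∨ x = 1 := by revert x; decide
  · simp
  · norm_num [parityChar_apply, ZMod.val_one]

lemma parityChar_mul_parityChar (x y : ZMod 2) :
    parityChar x * parityChar y = parityChar (x - y) := by
  rw [← AddChar.map_add_eq_mul, sub_eq_add_neg, ZMod.neg_eq_self_mod_two]

lemma sum_parityChar_dotProduct {ι : Type*} [Fintype ι] [DecidableEq ι] (y : ι → ZMod 2) :
    ∑ g, parityChar (g ⬝ᵥ y) = if y = 0 then 2 ^ Fintype.card ι else 0 := by
  let ψ := parityChar.compAddMonoidHom (AddMonoidHom.mk' (· ⬝ᵥ y) fun g h => add_dotProduct g h y)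
  have hψ : ψ = 0 ↔ y = 0 := by
    rw [← dotProduct_eq_zero_iff, AddChar.ext_iff]
    simp only [ψ, AddChar.compAddMonoidHom_apply, AddMonoidHom.mk'_apply, AddChar.zero_apply,
      parityChar_eq_one_iff, dotProduct_comm y]
  simpa [hψ, ψ] using ψ.sum_eq_ite

section BlockGram

variable {V K : Type*} [Fintype V] [DecidableEq K] (s : V → K) (a : V → ℝ)

def blockGram : Matrix V V ℝ :=
  Matrix.of fun v w => if s v = s w then a v * a w else 0

def blockWeight (j : K) : ℝ :=
  ∑ v with s v = j, a v ^ 2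

-- Where `blockWeight s a j = 0`, `a` vanishes on the block, so the junk value `x / √0 = 0`
-- does no harm.
def blockVec (j : K) : V → ℝ :=
  fun v => if s v = j then a v / √(blockWeight s a j) else 0

variable {s a}

lemma eq_zero_of_blockWeight_eq_zero {j : K} (h : blockWeight s a j = 0) {v : V}
    (hv : s v = j) : a v = 0 :=
  pow_eq_zero_iff two_ne_zero |>.mp <|
    (Finset.sum_eq_zero_iff_of_nonneg fun _ _ => sq_nonneg _).mp h v (by simpa using hv)

variable (s a)

lemma blockGram_mulVec_blockVec (j : K) :
    blockGram s a *ᵥ blockVec s a j = blockWeight s a j • blockVec s a j := by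
  ext v
  have hterm : ∀ w, blockGram s a v w * blockVec s a j w =
      if s v = j then a v / √(blockWeight s a j) * (if s w = j then a w ^ 2 else 0) else 0 := by
    intro w
    simp only [blockGram, blockVec, of_apply]
    split_ifs <;> grind
  change ∑ w, blockGram s a v w * blockVec s a j w = blockWeight s a j * blockVec s a j v
  rw [Finset.sum_congr rfl fun w _ => hterm w, blockVec]
  split_ifs
  · rw [← Finset.mul_sum, ← Finset.sum_filter, blockWeight]; ring
  · simp

lemma blockGram_eq_sum [Fintype K] :
    blockGram s a = ∑ j, blockWeight s a j • vecMulVec (blockVec s a j) (blockVec s a j) := by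
  ext v w
  simp only [blockGram, blockVec, of_apply, Matrix.sum_apply, Matrix.smul_apply, vecMulVec_apply,
    smul_eq_mul]
  rw [Finset.sum_eq_single (s v) (fun j _ hj => by simp [Ne.symm hj]) (by simp)]
  by_cases hvw : s v = s w
  · rw [if_pos hvw, if_pos rfl, if_pos hvw.symm]
    by_cases h0 : blockWeight s a (s v) = 0
    · simp [eq_zero_of_blockWeight_eq_zero h0 rfl]
    · have hsq : √(blockWeight s a (s v)) ^ 2 = blockWeight s a (s v) :=
        Real.sq_sqrt (Finset.sum_nonneg fun _ _ => sq_nonneg _)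
      rw [div_mul_div_comm, ← sq, hsq]
      field_simp
  · rw [if_neg hvw, if_neg (Ne.symm hvw), mul_zero, mul_zero]

end BlockGram

open Finset in
lemma prod_ite_eq_zero_eq_pow_hammingWt {ι M : Type*} [Fintype ι] [CommMonoid M]
    (v : ι → ZMod 2) (c s : M) :
    ∏ j, (if v j = 0 then c else s) = c ^ (Fintype.card ι - hammingWt v) * s ^ hammingWt v := by
  have hcard : #{j | v j = 0} + hammingWt v = Fintype.card ι := by
    rw [hammingWt, ← Finset.card_univ]
    exact Finset.card_filter_add_card_filter_not (s := Finset.univ) (fun j => v j = 0)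
  rw [Finset.prod_ite, Finset.prod_const, Finset.prod_const, ← hcard, Nat.add_sub_cancel]
  rfl

def productAmplitude {ι : Type*} [Fintype ι] (θ : ℝ) (v : ι → ZMod 2) : ℝ :=
  ∏ j, if v j = 0 then Real.cos (θ / 2) else Real.sin (θ / 2)

section ProductAmplitude

variable {ι : Type*} [Fintype ι] {θ : ℝ}

lemma productAmplitude_sq (v : ι → ZMod 2) :
    productAmplitude θ v ^ 2 = bernP ((1 - Real.cos θ) / 2) (Fintype.card ι) v := by
  have hcos : Real.cos (θ / 2) ^ 2 = 1 - (1 - Real.cos θ) / 2 := by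
    rw [Real.cos_sq, show 2 * (θ / 2) = θ by ring]; ring
  have hsin : Real.sin (θ / 2) ^ 2 = (1 - Real.cos θ) / 2 := by
    rw [Real.sin_sq, hcos]; ring
  rw [productAmplitude, prod_ite_eq_zero_eq_pow_hammingWt, mul_pow, ← pow_mul, ← pow_mul,
    mul_comm _ 2, mul_comm _ 2, pow_mul, pow_mul, hcos, hsin, bernP, mul_comm]

lemma productAmplitude_nonneg (h0 : 0 ≤ θ) (hπ : θ ≤ Real.pi) (v : ι → ZMod 2) :
    0 ≤ productAmplitude θ v := by
  have hsin : 0 ≤ Real.sin (θ / 2) :=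
    Real.sin_nonneg_of_nonneg_of_le_pi (by linarith) (by linarith)
  have hcos : 0 ≤ Real.cos (θ / 2) :=
    Real.cos_nonneg_of_mem_Icc ⟨by linarith [Real.pi_pos], by linarith⟩
  exact Finset.prod_nonneg fun j _ => by split_ifs <;> assumption

end ProductAmplitude

section Coset

variable {α β n R : Type*} [Fintype α] [Fintype β] [CommRing R]

lemma vecMul_submatrix_inl_add_vecMul_submatrix_inr (B : Matrix n (α ⊕ β) R) (x : α → R)
    (u : β → R) :
    vecMul x (Bᵀ.submatrix Sum.inl id) + vecMul u (Bᵀ.submatrix Sum.inr id) =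
      B *ᵥ Sum.elim x u := by
  rw [← sumElim_vecMul_fromRows, ← vecMul_transpose]
  exact congrArg _ (fromRows_toRows Bᵀ)

variable [DecidableEq α] [DecidableEq β] {A : Matrix (α ⊕ β) (α ⊕ β) R}

lemma eq_inv_mulVec_iff (hA : IsUnit A) {v x : α ⊕ β → R} : v = A⁻¹ *ᵥ x ↔ A *ᵥ v = x := by
  have hdet := (isUnit_iff_isUnit_det A).mp hA
  constructor
  · rintro rfl
    rw [mulVec_mulVec, mul_nonsing_inv A hdet, one_mulVec]
  · rintro rfl
    rw [mulVec_mulVec, nonsing_inv_mul A hdet, one_mulVec]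

lemma exists_eq_inv_mulVec_sumElim_iff (hA : IsUnit A) (x : α → R) (v : α ⊕ β → R) :
    (∃ u, v = A⁻¹ *ᵥ Sum.elim x u) ↔ A.toRows₁ *ᵥ v = x := by
  simp only [eq_inv_mulVec_iff hA]
  constructor
  · rintro ⟨u, hu⟩
    exact funext fun i => congr_fun hu (Sum.inl i)
  · rintro rfl
    exact ⟨A.toRows₂ *ᵥ v, by rw [← fromRows_mulVec, fromRows_toRows]⟩

lemma sum_inv_mulVec_sumElim [Fintype R] [DecidableEq R] {M : Type*} [AddCommMonoid M]
    (hA : IsUnit A) (f : (α ⊕ β → R) → M) (x : α → R) :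
    ∑ u, f (A⁻¹ *ᵥ Sum.elim x u) = ∑ v with A.toRows₁ *ᵥ v = x, f v := by
  have hinj : Function.Injective fun u => A⁻¹ *ᵥ Sum.elim x u :=
    (mulVec_injective_of_isUnit (isUnit_nonsing_inv_iff.mpr hA)).comp Sum.elim_injective'
  rw [← Finset.sum_image hinj.injOn]
  congr 1
  ext v
  simp [← exists_eq_inv_mulVec_sumElim_iff hA, eq_comm]

end Coset

namespace PSC

variable {k m : ℕ} {θ : ℝ} {A : Matrix (Fin k ⊕ Fin m) (Fin k ⊕ Fin m) (ZMod 2)}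

lemma pscVec_apply (g : Fin k → ZMod 2) (v : Fin k ⊕ Fin m → ZMod 2) :
    pscVec θ A g v = parityChar (g ⬝ᵥ (A.toRows₁ *ᵥ v)) * productAmplitude θ v := by
  rw [dotProduct_mulVec]
  rfl

lemma rhoPSC_eq_blockGram : rhoPSC θ A = blockGram (A.toRows₁ *ᵥ ·) (productAmplitude θ) := by
  ext v w
  have hterm : ∀ g, pscVec θ A g v * pscVec θ A g w =
      parityChar (g ⬝ᵥ (A.toRows₁ *ᵥ v - A.toRows₁ *ᵥ w)) *
        (productAmplitude θ v * productAmplitude θ w) := fun g => by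
    rw [pscVec_apply, pscVec_apply, dotProduct_sub, ← parityChar_mul_parityChar]; ring
  simp only [rhoPSC, blockGram, Matrix.smul_apply, Matrix.sum_apply, vecMulVec_apply, hterm,
    ← Finset.sum_mul, sum_parityChar_dotProduct, sub_eq_zero, of_apply, smul_eq_mul]
  split_ifs <;> simp

lemma lamPSC_eq_blockWeight (hA : IsUnit A) (mh : Fin k → ZMod 2) :
    lamPSC ((1 - Real.cos θ) / 2) A mh = blockWeight (A.toRows₁ *ᵥ ·) (productAmplitude θ) mh := by
  simp only [lamPSC, vecMul_submatrix_inl_add_vecMul_submatrix_inr, sum_inv_mulVec_sumElim hA,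
    blockWeight, productAmplitude_sq, Fintype.card_sum, Fintype.card_fin]

lemma psiPSC_eq_blockVec (hA : IsUnit A) (h0 : 0 ≤ θ) (hπ : θ ≤ Real.pi) (mh : Fin k → ZMod 2) :
    psiPSC ((1 - Real.cos θ) / 2) A mh = blockVec (A.toRows₁ *ᵥ ·) (productAmplitude θ) mh := by
  ext v
  simp only [psiPSC, blockVec, vecMul_submatrix_inl_add_vecMul_submatrix_inr,
    exists_eq_inv_mulVec_sumElim_iff hA, lamPSC_eq_blockWeight hA]
  split_ifs
  · rw [show k + m = Fintype.card (Fin k ⊕ Fin m) by simp, ← productAmplitude_sq,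
      Real.sqrt_div (sq_nonneg _), Real.sqrt_sq (productAmplitude_nonneg h0 hπ v)]
  · rfl

end PSC

/-- Eigendecomposition of the averaged PSC coset state: each
|ψ(m̂)⟩ is an eigenvector of ρ with eigenvalue λ(m̂) = 2^{-k/2} ŝ(m̂), where
p = sin²(θ/2) = (1 - cos θ)/2, and these account for all nonzero eigenvalues:
ρ = ∑_m̂ λ(m̂) |ψ(m̂)⟩⟨ψ(m̂)|. -/
theorem psc_coset_state_eigendecomposition (k m : ℕ)
    (A : Matrix (Fin k ⊕ Fin m) (Fin k ⊕ Fin m) (ZMod 2)) (hA : IsUnit A)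
    (θ p : ℝ) (hθ0 : 0 < θ) (hθ1 : θ ≤ Real.pi / 2)
    (hp : p = (1 - Real.cos θ) / 2) :
    (∀ mh : Fin k → ZMod 2,
      (rhoPSC θ A).mulVec (psiPSC p A mh) = lamPSC p A mh • psiPSC p A mh) ∧
    rhoPSC θ A = ∑ mh : Fin k → ZMod 2,
      lamPSC p A mh • Matrix.vecMulVec (psiPSC p A mh) (psiPSC p A mh) := by
  have hπ : θ ≤ Real.pi := by linarith [Real.pi_pos]
  subst hp
  simp only [PSC.rhoPSC_eq_blockGram, PSC.psiPSC_eq_blockVec hA hθ0.le hπ,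
    PSC.lamPSC_eq_blockWeight hA]
  exact ⟨blockGram_mulVec_blockVec _ _, blockGram_eq_sum _ _⟩

end
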